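/- arXiv:2511.12358 — 3 statements merged into one kernel-verified Lean document; each statement's English description precedes it below -/
import Mathlib

section
/- Let u be a sequence over a finite alphabet. Then u is eventually periodic if and only if there exists n ∈ ℕ such that r_u(n+2) = r_u(n). -/
namespace ReflPaper

variable {A : Type*}

/-- The factor of `u` of length `n` at position `i`: `u(i) u(i+1) ⋯ u(i+n-1)`. -/
def factorAt (u : ℕ → A) (n i : ℕ) : List A :=
  (List.range n).map (fun k => u (i + k))

/-- The word `w` occurs in the sequence `u` at position `i`. -/
def OccursAt (u : ℕ → A) (w : List A) (i : ℕ) : Prop :=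
  w = factorAt u w.length i

/-- The language of `u`: the set of all factors of `u`. -/
def Lang (u : ℕ → A) : Set (List A) := {w | ∃ i, OccursAt u w i}

/-- The set of factors of `u` of length `n`. -/
def LangN (u : ℕ → A) (n : ℕ) : Set (List A) := {w | w.length = n ∧ w ∈ Lang u}

/-- The word `w` occurs infinitely many times in `u`. -/
def OccursInf (u : ℕ → A) (w : List A) : Prop := {i | OccursAt u w i}.Infinite

/-- `u` is eventually periodic. -/
def EventuallyPeriodic (u : ℕ → A) : Prop :=
  ∃ N p : ℕ, 1 ≤ p ∧ ∀ i, N ≤ i → u (i + p) = u i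

/-- Two words are reflectively equivalent if one equals the other or its reversal. -/
def ReflEquiv (w v : List A) : Prop := w = v ∨ w = v.reverse

/-- Reflective equivalence as a setoid on words. -/
def reflSetoid (A : Type*) : Setoid (List A) where
  r := ReflEquiv
  iseqv := by
    constructor
    · intro w; exact Or.inl rfl
    · intro w v h
      rcases h with h | h
      · exact Or.inl h.symm
      · subst h; simp [ReflEquiv]
    · intro w v x h1 h2
      rcases h1 with h1 | h1 <;> rcases h2 with h2 | h2 <;> subst h1 <;>
        simp [ReflEquiv, h2]

/-- The number of reflective-equivalence classes of words in a set `S`. -/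
noncomputable def nClasses (S : Set (List A)) : ℕ :=
  Set.ncard (Quotient.mk (reflSetoid A) '' S)

/-- The reflection complexity `r_u(n)`. -/
noncomputable def reflComplexity (u : ℕ → A) (n : ℕ) : ℕ := nClasses (LangN u n)

/-- The factor complexity `C_u(n) = #L_n(u)`. -/
noncomputable def factorComplexity (u : ℕ → A) (n : ℕ) : ℕ := (LangN u n).ncard

/-- The palindromic complexity `P_u(n)`. -/
noncomputable def palComplexity (u : ℕ → A) (n : ℕ) : ℕ :=
  Set.ncard {w ∈ LangN u n | w.reverse = w}

/-- Both-sided extensions of `w` in the language of `u`. -/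
def Bext (u : ℕ → A) (w : List A) : Set (List A) :=
  {x ∈ Lang u | ∃ a b : A, x = a :: (w ++ [b])}

/-- Right extensions of `w` in the language of `u`. -/
def Rext (u : ℕ → A) (w : List A) : Set (List A) :=
  {x ∈ Lang u | ∃ a : A, x = w ++ [a]}

/-- `T(w)`: the number of reflective-equivalence classes of `Bext(w) ∪ Bext(w̄)`. -/
noncomputable def TT (u : ℕ → A) (w : List A) : ℕ :=
  nClasses (Bext u w ∪ Bext u w.reverse)

/-- `w` is a right special factor of `u`. -/
def RightSpecial (u : ℕ → A) (w : List A) : Prop :=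
  ∃ a b : A, a ≠ b ∧ w ++ [a] ∈ Lang u ∧ w ++ [b] ∈ Lang u

/-- `w` is a left special factor of `u`. -/
def LeftSpecial (u : ℕ → A) (w : List A) : Prop :=
  ∃ a b : A, a ≠ b ∧ a :: w ∈ Lang u ∧ b :: w ∈ Lang u

/-- `u` is Sturmian: `C_u(n) = n + 1` for all `n`. -/
def Sturmian (u : ℕ → A) : Prop := ∀ n, factorComplexity u n = n + 1

/-- `u` is quasi-Sturmian: `C_u(n) = n + c` eventually. -/
def QuasiSturmian (u : ℕ → A) : Prop :=
  ∃ n₀ c : ℕ, ∀ n, n₀ ≤ n → factorComplexity u n = n + c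

/-! Deleting the first and the last letter maps factors of length `n + 2` to factors of length `n`
compatibly with reversal, hence maps reflection classes to reflection classes. Past a position `K`
after which every factor of length `n` recurs, this map is onto the classes occurring from `K` on.
The positions before `K` contribute at least as much to `r_u(n + 2)` as to `r_u(n)`: if the factor
of length `n` at a position never reappears later, not even reversed, neither does the factor of
length `n + 2` there. Hence `r_u(n) ≤ r_u(n + 2)`, and equality makes the map injective past `K`,
so that there a factor of length `n + 1` determines the next letter and `u` is eventually periodic.
Conversely, an eventually periodic sequence has bounded reflection complexity, which cannot
increase strictly at every step of `2`. -/

lemma length_factorAt (u : ℕ → A) (m i : ℕ) : (factorAt u m i).length = m := by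
  simp [factorAt]

lemma factorAt_eq_factorAt_iff {u : ℕ → A} {m i j : ℕ} :
    factorAt u m i = factorAt u m j ↔ ∀ k < m, u (i + k) = u (j + k) := by
  simp [factorAt, List.map_inj_left]

lemma factorAt_add (u : ℕ → A) (m n i : ℕ) :
    factorAt u (m + n) i = factorAt u m i ++ factorAt u n (i + m) := by
  simp [factorAt, List.range_add, add_assoc]

lemma factorAt_succ (u : ℕ → A) (m i : ℕ) :
    factorAt u (m + 1) i = factorAt u m i ++ [u (i + m)] := by
  rw [factorAt_add]
  simp [factorAt]

lemma factorAt_succ' (u : ℕ → A) (m i : ℕ) :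
    factorAt u (m + 1) i = u i :: factorAt u m (i + 1) := by
  rw [add_comm m, factorAt_add]
  simp [factorAt]

lemma factorAt_add_one_eq {u : ℕ → A} {m i j : ℕ} (h : factorAt u m i = factorAt u m j)
    (hnext : u (i + m) = u (j + m)) : factorAt u m (i + 1) = factorAt u m (j + 1) := by
  have hsucc : factorAt u (m + 1) i = factorAt u (m + 1) j := by
    rw [factorAt_succ, factorAt_succ, h, hnext]
  rw [factorAt_succ', factorAt_succ'] at hsucc
  exact (List.cons.inj hsucc).2

lemma last_eq_of_factorAt_eq_reverse {u : ℕ → A} {m i j : ℕ}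
    (h : factorAt u (m + 1) i = (factorAt u (m + 1) j).reverse) : u (i + m) = u j := by
  rw [factorAt_succ, factorAt_succ', List.reverse_cons] at h
  simpa using (List.append_inj' h rfl).2

lemma langN_eq_range (u : ℕ → A) (m : ℕ) : LangN u m = Set.range (factorAt u m) := by
  ext w
  constructor
  · rintro ⟨rfl, i, hi⟩
    exact ⟨i, hi.symm⟩
  · rintro ⟨i, rfl⟩
    exact ⟨length_factorAt u m i, i, by rw [OccursAt, length_factorAt]⟩

lemma exists_forall_exists_gt_factorAt_eq [Finite A] (u : ℕ → A) (m : ℕ) :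
    ∃ K, ∀ i ≥ K, ∃ j > i, factorAt u m j = factorAt u m i := by
  set S := {i | ∀ j > i, factorAt u m j ≠ factorAt u m i}
  have hinj : Set.InjOn (factorAt u m) S := by
    intro i hi j hj hij
    by_contra hne
    rcases Nat.lt_or_gt_of_ne hne with h | h
    · exact hi j h hij.symm
    · exact hj i h hij
  have himage : (factorAt u m '' S).Finite :=
    (List.finite_length_eq A m).subset (by rintro _ ⟨i, -, rfl⟩; exact length_factorAt u m i)
  obtain ⟨K, hK⟩ := (himage.of_finite_image hinj).bddAbove
  refine ⟨K + 1, fun i hi => ?_⟩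
  by_contra! h
  exact absurd (hK h) (by omega)

lemma eventuallyPeriodic_of_factorAt_determines_next [Finite A] {u : ℕ → A} {m K : ℕ}
    (hdet : ∀ j j', K ≤ j → K ≤ j' →
      factorAt u m j = factorAt u m j' → u (j + m) = u (j' + m)) :
    EventuallyPeriodic u := by
  obtain ⟨a, b, hne, hab⟩ :=
    Finite.exists_ne_map_eq_of_infinite fun i : ℕ => fun k : Fin m => u (K + i + k)
  wlog hlt : a < b generalizing a b
  · exact this b a hne.symm hab.symm (by omega)
  have hshift : ∀ d, factorAt u m (K + a + d) = factorAt u m (K + b + d) := by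
    intro d
    induction d with
    | zero => exact factorAt_eq_factorAt_iff.2 fun k hk => congrFun hab ⟨k, hk⟩
    | succ d ih =>
      exact factorAt_add_one_eq ih (hdet (K + a + d) (K + b + d) (by omega) (by omega) ih)
  refine ⟨K + a + m, b - a, by omega, fun i hi => ?_⟩
  obtain ⟨d, rfl⟩ : ∃ d, i = K + a + d + m := ⟨i - (K + a + m), by omega⟩
  rw [show K + a + d + m + (b - a) = K + b + d + m by omega]
  exact (hdet _ _ (by omega) (by omega) (hshift d)).symm

def dropEnds (w : List A) : List A := w.tail.dropLast

lemma dropEnds_reverse (w : List A) : dropEnds w.reverse = (dropEnds w).reverse := by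
  simp [dropEnds, List.tail_reverse, List.dropLast_reverse, List.tail_dropLast]

lemma dropEnds_factorAt (u : ℕ → A) (n i : ℕ) :
    dropEnds (factorAt u (n + 2) i) = factorAt u n (i + 1) := by
  rw [dropEnds, factorAt_succ', List.tail_cons, factorAt_succ, List.dropLast_concat]

abbrev reflClass (w : List A) : Quotient (reflSetoid A) := Quotient.mk _ w

lemma reflClass_eq_reflClass_iff {w v : List A} :
    reflClass w = reflClass v ↔ w = v ∨ w = v.reverse :=
  Quotient.eq

lemma reflClass_reverse (w : List A) : reflClass w.reverse = reflClass w :=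
  reflClass_eq_reflClass_iff.2 (Or.inr rfl)

def dropEndsClass : Quotient (reflSetoid A) → Quotient (reflSetoid A) :=
  Quotient.map dropEnds fun w v h => by
    rcases h with rfl | rfl
    exacts [Or.inl rfl, Or.inr (dropEnds_reverse v)]

lemma dropEndsClass_reflClass (w : List A) :
    dropEndsClass (reflClass w) = reflClass (dropEnds w) :=
  rfl

def factorClassesFrom (u : ℕ → A) (m K : ℕ) : Set (Quotient (reflSetoid A)) :=
  (fun i => reflClass (factorAt u m i)) '' Set.Ici K

lemma reflComplexity_eq_ncard_factorClassesFrom (u : ℕ → A) (m : ℕ) :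
    reflComplexity u m = (factorClassesFrom u m 0).ncard := by
  rw [reflComplexity, nClasses, langN_eq_range, factorClassesFrom,
    Set.eq_univ_of_forall (s := Set.Ici 0) Nat.zero_le, Set.image_univ, ← Set.range_comp]
  rfl

lemma factorClassesFrom_finite [Finite A] (u : ℕ → A) (m K : ℕ) :
    (factorClassesFrom u m K).Finite := by
  refine ((List.finite_length_eq A m).image reflClass).subset ?_
  rintro _ ⟨i, -, rfl⟩
  exact ⟨_, length_factorAt u m i, rfl⟩

lemma factorClassesFrom_eq_insert (u : ℕ → A) (m K : ℕ) :
    factorClassesFrom u m K =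
      insert (reflClass (factorAt u m K)) (factorClassesFrom u m (K + 1)) := by
  rw [factorClassesFrom, factorClassesFrom, Set.Ici_add_one_eq_Ioi, ← Set.Ioi_insert,
    Set.image_insert_eq]

lemma factorClassesFrom_succ_subset (u : ℕ → A) (m K : ℕ) :
    factorClassesFrom u m (K + 1) ⊆ factorClassesFrom u m K := by
  rw [factorClassesFrom_eq_insert u m K]
  exact Set.subset_insert _ _

/-- A later occurrence of the longer factor, or of its reversal, contains a later occurrence of
the shorter one, or of its reversal. -/
lemma reflClass_factorAt_mem_of_add_two {u : ℕ → A} {n K : ℕ}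
    (h : reflClass (factorAt u (n + 2) K) ∈ factorClassesFrom u (n + 2) (K + 1)) :
    reflClass (factorAt u n K) ∈ factorClassesFrom u n (K + 1) := by
  obtain ⟨j, hj, hclass⟩ := h
  rcases reflClass_eq_reflClass_iff.1 hclass with heq | hrev
  · rw [factorAt_add, factorAt_add u n 2 K] at heq
    exact ⟨j, hj, congrArg reflClass (List.append_inj heq (by simp [length_factorAt])).1⟩
  · have hK : factorAt u n K ++ factorAt u 2 (K + n) =
        (factorAt u n (j + 2)).reverse ++ (factorAt u 2 j).reverse := by
      rw [← factorAt_add, ← List.reverse_reverse (factorAt u (n + 2) K), ← hrev, add_comm n 2,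
        factorAt_add, List.reverse_append]
    refine ⟨j + 2, by simp only [Set.mem_Ici] at hj ⊢; omega, ?_⟩
    rw [(List.append_inj hK (by simp [length_factorAt])).1]
    exact (reflClass_reverse _).symm

lemma ncard_factorClassesFrom_add_le [Finite A] (u : ℕ → A) (n K : ℕ) :
    (factorClassesFrom u n K).ncard + (factorClassesFrom u (n + 2) (K + 1)).ncard ≤
      (factorClassesFrom u (n + 2) K).ncard + (factorClassesFrom u n (K + 1)).ncard := by
  by_cases hmem : reflClass (factorAt u n K) ∈ factorClassesFrom u n (K + 1)
  · rw [factorClassesFrom_eq_insert u n K, Set.insert_eq_of_mem hmem]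
    have := Set.ncard_le_ncard (factorClassesFrom_succ_subset u (n + 2) K)
      (factorClassesFrom_finite u (n + 2) K)
    omega
  · rw [factorClassesFrom_eq_insert u n K, factorClassesFrom_eq_insert u (n + 2) K,
      Set.ncard_insert_of_notMem hmem (factorClassesFrom_finite u n (K + 1)),
      Set.ncard_insert_of_notMem (mt reflClass_factorAt_mem_of_add_two hmem)
        (factorClassesFrom_finite u (n + 2) (K + 1))]
    omega

lemma reflComplexity_add_ncard_factorClassesFrom_le [Finite A] (u : ℕ → A) (n K : ℕ) :
    reflComplexity u n + (factorClassesFrom u (n + 2) K).ncard ≤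
      reflComplexity u (n + 2) + (factorClassesFrom u n K).ncard := by
  rw [reflComplexity_eq_ncard_factorClassesFrom, reflComplexity_eq_ncard_factorClassesFrom]
  induction K with
  | zero => omega
  | succ K ih =>
    have := ncard_factorClassesFrom_add_le u n K
    omega

section Recurrent

variable {u : ℕ → A} {n K : ℕ}

lemma dropEndsClass_image_factorClassesFrom
    (hrec : ∀ i ≥ K, ∃ j > i, factorAt u n j = factorAt u n i) :
    dropEndsClass '' factorClassesFrom u (n + 2) K = factorClassesFrom u n K := by
  apply subset_antisymm
  · rintro _ ⟨_, ⟨i, hi, rfl⟩, rfl⟩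
    refine factorClassesFrom_succ_subset u n K ⟨i + 1, by simpa using hi, ?_⟩
    simp only [dropEndsClass_reflClass, dropEnds_factorAt]
  · rintro _ ⟨i, hi, rfl⟩
    obtain ⟨j, hj, hji⟩ := hrec i hi
    obtain ⟨j, rfl⟩ : ∃ j', j = j' + 1 := ⟨j - 1, by omega⟩
    refine ⟨_, ⟨j, by simp only [Set.mem_Ici] at hi ⊢; omega, rfl⟩, ?_⟩
    simp only [dropEndsClass_reflClass, dropEnds_factorAt, hji]

lemma ncard_factorClassesFrom_le_add_two [Finite A]
    (hrec : ∀ i ≥ K, ∃ j > i, factorAt u n j = factorAt u n i) :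
    (factorClassesFrom u n K).ncard ≤ (factorClassesFrom u (n + 2) K).ncard := by
  rw [← dropEndsClass_image_factorClassesFrom hrec]
  exact Set.ncard_image_le (factorClassesFrom_finite u (n + 2) K)

/-- When the two factors of length `n + 2` are reversals of each other, the last letter of each is
the first letter of the other, and their first letters agree. -/
lemma letter_eq_of_injOn_dropEndsClass
    (hinj : Set.InjOn dropEndsClass (factorClassesFrom u (n + 2) K)) {j j' : ℕ}
    (hj : K ≤ j) (hj' : K ≤ j') (h : factorAt u (n + 1) j = factorAt u (n + 1) j') :
    u (j + (n + 1)) = u (j' + (n + 1)) := by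
  have hletters := factorAt_eq_factorAt_iff.1 h
  have hmid : factorAt u n (j + 1) = factorAt u n (j' + 1) :=
    factorAt_eq_factorAt_iff.2 fun k hk => by
      simpa only [add_assoc, add_comm 1 k] using hletters (1 + k) (by omega)
  have hclass := hinj ⟨j, hj, rfl⟩ ⟨j', hj', rfl⟩
    (by simp only [dropEndsClass_reflClass, dropEnds_factorAt, hmid])
  rcases reflClass_eq_reflClass_iff.1 hclass with heq | hrev
  · exact factorAt_eq_factorAt_iff.1 heq (n + 1) (by omega)
  · have hrev' : factorAt u (n + 2) j' = (factorAt u (n + 2) j).reverse := by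
      rw [hrev, List.reverse_reverse]
    rw [last_eq_of_factorAt_eq_reverse hrev, last_eq_of_factorAt_eq_reverse hrev']
    simpa using (hletters 0 (by omega)).symm

end Recurrent

theorem reflComplexity_le_add_two [Finite A] (u : ℕ → A) (n : ℕ) :
    reflComplexity u n ≤ reflComplexity u (n + 2) := by
  obtain ⟨K, hrec⟩ := exists_forall_exists_gt_factorAt_eq u n
  have hprefix := reflComplexity_add_ncard_factorClassesFrom_le u n K
  have htail := ncard_factorClassesFrom_le_add_two hrec
  omega

theorem eventuallyPeriodic_of_reflComplexity_add_two_eq [Finite A] {u : ℕ → A} {n : ℕ}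
    (h : reflComplexity u (n + 2) = reflComplexity u n) : EventuallyPeriodic u := by
  obtain ⟨K, hrec⟩ := exists_forall_exists_gt_factorAt_eq u n
  have himage := dropEndsClass_image_factorClassesFrom hrec
  have hinj : Set.InjOn dropEndsClass (factorClassesFrom u (n + 2) K) := by
    refine Set.injOn_of_ncard_image_eq ?_ (factorClassesFrom_finite u (n + 2) K)
    have hprefix := reflComplexity_add_ncard_factorClassesFrom_le u n K
    have htail := ncard_factorClassesFrom_le_add_two hrec
    rw [himage]
    omega
  exact eventuallyPeriodic_of_factorAt_determines_next fun j j' hj hj' =>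
    letter_eq_of_injOn_dropEndsClass hinj hj hj'

lemma exists_reflComplexity_le_of_eventuallyPeriodic {u : ℕ → A} (h : EventuallyPeriodic u) :
    ∃ B, ∀ m, reflComplexity u m ≤ B := by
  obtain ⟨N, p, hp, hper⟩ := h
  refine ⟨(Set.Iio (N + p)).ncard, fun m => ?_⟩
  have hback : ∀ i, ∃ i' < N + p, factorAt u m i' = factorAt u m i := by
    intro i
    induction i using Nat.strong_induction_on with
    | _ i ih =>
      by_cases hi : i < N + p
      · exact ⟨i, hi, rfl⟩
      · obtain ⟨i', hi', he⟩ := ih (i - p) (by omega)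
        refine ⟨i', hi', he.trans (factorAt_eq_factorAt_iff.2 fun k _ => ?_)⟩
        rw [← hper (i - p + k) (by omega), show i - p + k + p = i + k by omega]
  have hsub : LangN u m ⊆ factorAt u m '' Set.Iio (N + p) := by
    rw [langN_eq_range]
    rintro _ ⟨i, rfl⟩
    exact hback i
  calc reflComplexity u m ≤ (LangN u m).ncard :=
        Set.ncard_image_le ((Set.toFinite _).subset hsub)
    _ ≤ (factorAt u m '' Set.Iio (N + p)).ncard := Set.ncard_le_ncard hsub (Set.toFinite _)
    _ ≤ (Set.Iio (N + p)).ncard := Set.ncard_image_le (Set.finite_Iio _)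

lemma exists_add_two_eq_of_le_add_two_of_le {f : ℕ → ℕ} {B : ℕ}
    (hmono : ∀ n, f n ≤ f (n + 2)) (hB : ∀ n, f n ≤ B) : ∃ n, f (n + 2) = f n := by
  by_contra! hne
  have hgrow : ∀ k, k ≤ f (2 * k) := by
    intro k
    induction k with
    | zero => exact Nat.zero_le _
    | succ k ih =>
      have := lt_of_le_of_ne (hmono (2 * k)) (hne (2 * k)).symm
      rw [mul_add_one]
      omega
  have := hgrow (B + 1)
  have := hB (2 * (B + 1))
  omega

/-- `u` is eventually periodic iff `r_u(n+2) = r_u(n)` for some `n`. -/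
theorem stmt0 {A : Type*} [Fintype A] (u : ℕ → A) :
    EventuallyPeriodic u ↔
      ∃ n : ℕ, reflComplexity u (n + 2) = reflComplexity u n := by
  constructor
  · intro hper
    obtain ⟨B, hB⟩ := exists_reflComplexity_le_of_eventuallyPeriodic hper
    exact exists_add_two_eq_of_le_add_two_of_le (reflComplexity_le_add_two u) hB
  · rintro ⟨n, h⟩
    exact eventuallyPeriodic_of_reflComplexity_add_two_eq h

end ReflPaper
end

section
/- Let u be a sequence over a finite alphabet, w a word, and c a letter such that cw is a right special factor of u. Then T(w) ≥ 2; moreover, T(w) = 2 if and only if there exist two distinct letters a, b such that {cwa, cwb} ⊆ Bext(w) ∪ Bext(w̄) ⊆ {cwa, cwb, aw̄c, bw̄c}. -/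
namespace ReflPaper

variable {A : Type*}

private lemma not_equiv {A : Type*} {w : List A} {a b c : A} (hab : a ≠ b) :
    ¬ ReflEquiv (c :: (w ++ [a])) (c :: (w ++ [b])) := by
  rintro (h | h)
  · exact hab (by simpa using h)
  · have h' : c :: (w ++ [a]) = b :: (w.reverse ++ [c]) := by simpa using h
    obtain ⟨hcb, h2⟩ := List.cons.injEq .. ▸ h'
    have : [a] = [c] := List.append_inj_right h2 (by simp)
    exact hab ((List.cons.injEq .. ▸ this).1.trans hcb)

private lemma rev_equiv {A : Type*} (w : List A) (a c : A) :
    ReflEquiv (a :: (w.reverse ++ [c])) (c :: (w ++ [a])) := by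
  right; simp

/-- if `cw` is right special then `T(w) ≥ 2`, with equality iff the
bidirectional extensions are squeezed between the two indicated sets. -/
theorem stmt3 {A : Type*} [Fintype A] (u : ℕ → A) (w : List A) (c : A)
    (h : RightSpecial u (c :: w)) :
    2 ≤ TT u w ∧
    (TT u w = 2 ↔ ∃ a b : A, a ≠ b ∧
      {c :: (w ++ [a]), c :: (w ++ [b])} ⊆ Bext u w ∪ Bext u w.reverse ∧
      Bext u w ∪ Bext u w.reverse ⊆
        {c :: (w ++ [a]), c :: (w ++ [b]),
         a :: (w.reverse ++ [c]), b :: (w.reverse ++ [c])}) := by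
  classical
  obtain ⟨a, b, hab, ha, hb⟩ := h
  set S : Set (List A) := Bext u w ∪ Bext u w.reverse with hSdef
  set q : List A → Quotient (reflSetoid A) := Quotient.mk (reflSetoid A) with hqdef
  have hfinS : S.Finite := by
    apply (List.finite_length_eq A (w.length + 2)).subset
    rintro x (⟨-, p, r, rfl⟩ | ⟨-, p, r, rfl⟩) <;> simp
  have hfinQ : (q '' S).Finite := hfinS.image q
  have haS : c :: (w ++ [a]) ∈ S := Or.inl ⟨ha, c, a, rfl⟩
  have hbS : c :: (w ++ [b]) ∈ S := Or.inl ⟨hb, c, b, rfl⟩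
  have hqne : q (c :: (w ++ [a])) ≠ q (c :: (w ++ [b])) := by
    intro h'
    exact not_equiv hab (Quotient.eq.mp h')
  have hTT : TT u w = (q '' S).ncard := rfl
  have h2le : 2 ≤ TT u w := by
    rw [hTT]
    exact (Set.one_lt_ncard_iff hfinQ).mpr
      ⟨q (c :: (w ++ [a])), q (c :: (w ++ [b])),
        ⟨_, haS, rfl⟩, ⟨_, hbS, rfl⟩, hqne⟩
  refine ⟨h2le, ?_, ?_⟩
  · -- forward direction
    intro hT
    refine ⟨a, b, hab, ?_, ?_⟩
    · intro x hx
      simp only [Set.mem_insert_iff, Set.mem_singleton_iff] at hx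
      rcases hx with rfl | rfl
      · exact haS
      · exact hbS
    · -- S ⊆ 4-element set
      have hpair : ({q (c :: (w ++ [a])), q (c :: (w ++ [b]))} : Set _) ⊆ q '' S := by
        intro x hx
        simp only [Set.mem_insert_iff, Set.mem_singleton_iff] at hx
        rcases hx with rfl | rfl
        · exact ⟨_, haS, rfl⟩
        · exact ⟨_, hbS, rfl⟩
      have heq : ({q (c :: (w ++ [a])), q (c :: (w ++ [b]))} : Set _) = q '' S := by
        apply Set.eq_of_subset_of_ncard_le hpair _ hfinQ
        rw [← hTT, hT, Set.ncard_pair hqne]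
      intro x hx
      have : q x ∈ ({q (c :: (w ++ [a])), q (c :: (w ++ [b]))} : Set _) := by
        rw [heq]; exact ⟨x, hx, rfl⟩
      rcases this with h' | h'
      · rcases Quotient.eq.mp h' with rfl | rfl
        · exact Or.inl rfl
        · right; right; left; simp
      · simp only [Set.mem_singleton_iff] at h'
        rcases Quotient.eq.mp h' with rfl | rfl
        · right; left; rfl
        · right; right; right; simp
  · -- backward direction
    rintro ⟨a', b', hab', hsub1, hsub2⟩
    have ha'S : c :: (w ++ [a']) ∈ S := hsub1 (Or.inl rfl)
    have hb'S : c :: (w ++ [b']) ∈ S := hsub1 (Or.inr rfl)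
    have hqne' : q (c :: (w ++ [a'])) ≠ q (c :: (w ++ [b'])) := by
      intro h'; exact not_equiv hab' (Quotient.eq.mp h')
    have himg : q '' S = {q (c :: (w ++ [a'])), q (c :: (w ++ [b']))} := by
      apply Set.Subset.antisymm
      · rintro - ⟨x, hx, rfl⟩
        rcases hsub2 hx with rfl | rfl | rfl | rfl
        · exact Or.inl rfl
        · exact Or.inr rfl
        · exact Or.inl (Quotient.sound (rev_equiv w a' c))
        · exact Or.inr (Quotient.sound (rev_equiv w b' c))
      · intro x hx
        simp only [Set.mem_insert_iff, Set.mem_singleton_iff] at hx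
        rcases hx with rfl | rfl
        · exact ⟨_, ha'S, rfl⟩
        · exact ⟨_, hb'S, rfl⟩
    rw [hTT, himg, Set.ncard_pair hqne']

end ReflPaper
end

section
/- Let u be a sequence over a finite alphabet, w a word, and c a letter such that wc is a left special factor of u. Then T(w) ≥ 2; moreover, T(w) = 2 if and only if there exist two distinct letters a, b such that {awc, bwc} ⊆ Bext(w) ∪ Bext(w̄) ⊆ {awc, bwc, cw̄a, cw̄b}. -/
namespace ReflPaper

variable {A : Type*}

/-!
If `a ≠ b`, the words `a w c` and `b w c` are not reflectively equivalent: they differ in the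
first letter, and `c w̄ b` would force `a = c = b`. Since `wc` is left special, two such words lie
in `Bext(w)`, so `T(w) ≥ 2`, and `T(w) = 2` exactly when every element of `Bext(w) ∪ Bext(w̄)`
equals one of them or its reversal `c w̄ a`, `c w̄ b`.
-/

theorem Bext_finite [Finite A] (u : ℕ → A) (w : List A) : (Bext u w).Finite :=
  (Set.finite_range fun p : A × A => p.1 :: (w ++ [p.2])).subset <| by
    rintro x ⟨-, a, b, rfl⟩
    exact ⟨(a, b), rfl⟩

theorem reflEquiv_cons_append_singleton_iff {z w : List A} {a c : A} :
    ReflEquiv z (a :: (w ++ [c])) ↔ z = a :: (w ++ [c]) ∨ z = c :: (w.reverse ++ [a]) := by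
  simp [ReflEquiv]

theorem not_reflEquiv_cons_append_singleton {w : List A} {a b c : A} (hab : a ≠ b) :
    ¬ ReflEquiv (a :: (w ++ [c])) (b :: (w ++ [c])) := by
  rw [reflEquiv_cons_append_singleton_iff]
  rintro (h | h)
  · exact hab (List.head_eq_of_cons_eq h)
  · have hlast := congrArg List.getLast? h
    simp only [List.getLast?_cons, List.getLast?_append, Option.some_or, Option.getD_some] at hlast
    exact hab ((List.head_eq_of_cons_eq h).trans (Option.some_injective _ hlast))

section nClasses

variable {S : Set (List A)} {x y : List A}

theorem pair_subset_image_mk (hx : x ∈ S) (hy : y ∈ S) :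
    {Quotient.mk (reflSetoid A) x, Quotient.mk (reflSetoid A) y} ⊆
      Quotient.mk (reflSetoid A) '' S :=
  Set.insert_subset_iff.2 ⟨⟨x, hx, rfl⟩, Set.singleton_subset_iff.2 ⟨y, hy, rfl⟩⟩

theorem ncard_pair_mk (hxy : ¬ ReflEquiv x y) :
    ({Quotient.mk (reflSetoid A) x, Quotient.mk (reflSetoid A) y} : Set _).ncard = 2 :=
  Set.ncard_pair fun h => hxy (Quotient.exact h)

theorem two_le_nClasses (hS : S.Finite) (hx : x ∈ S) (hy : y ∈ S) (hxy : ¬ ReflEquiv x y) :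
    2 ≤ nClasses S :=
  ncard_pair_mk hxy ▸ Set.ncard_le_ncard (pair_subset_image_mk hx hy) (hS.image _)

theorem nClasses_eq_two_iff (hS : S.Finite) (hx : x ∈ S) (hy : y ∈ S) (hxy : ¬ ReflEquiv x y) :
    nClasses S = 2 ↔ ∀ z ∈ S, ReflEquiv z x ∨ ReflEquiv z y := by
  have hpair := pair_subset_image_mk hx hy
  have himage_eq_iff : Quotient.mk (reflSetoid A) '' S =
      {Quotient.mk (reflSetoid A) x, Quotient.mk (reflSetoid A) y} ↔
      ∀ z ∈ S, ReflEquiv z x ∨ ReflEquiv z y := by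
    rw [subset_antisymm_iff, and_iff_left hpair, Set.image_subset_iff]
    exact forall₂_congr fun z _ => or_congr Quotient.eq Quotient.eq
  rw [← himage_eq_iff, nClasses]
  constructor
  · intro h
    exact (Set.eq_of_subset_of_ncard_le hpair (by rw [h, ncard_pair_mk hxy]) (hS.image _)).symm
  · intro h
    rw [h, ncard_pair_mk hxy]

end nClasses

/-- if `wc` is left special then `T(w) ≥ 2`, with equality iff the
bidirectional extensions are squeezed between the two indicated sets. -/
theorem stmt4 {A : Type*} [Fintype A] (u : ℕ → A) (w : List A) (c : A)
    (h : LeftSpecial u (w ++ [c])) :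
    2 ≤ TT u w ∧
    (TT u w = 2 ↔ ∃ a b : A, a ≠ b ∧
      {a :: (w ++ [c]), b :: (w ++ [c])} ⊆ Bext u w ∪ Bext u w.reverse ∧
      Bext u w ∪ Bext u w.reverse ⊆
        {a :: (w ++ [c]), b :: (w ++ [c]),
         c :: (w.reverse ++ [a]), c :: (w.reverse ++ [b])}) := by
  obtain ⟨a₀, b₀, hab₀, ha₀, hb₀⟩ := h
  have hfin : (Bext u w ∪ Bext u w.reverse).Finite :=
    (Bext_finite u w).union (Bext_finite u w.reverse)
  have hmem {x : A} (hx : x :: (w ++ [c]) ∈ Lang u) :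
      x :: (w ++ [c]) ∈ Bext u w ∪ Bext u w.reverse :=
    Or.inl ⟨hx, x, c, rfl⟩
  refine ⟨two_le_nClasses hfin (hmem ha₀) (hmem hb₀) (not_reflEquiv_cons_append_singleton hab₀),
    fun hT => ⟨a₀, b₀, hab₀, ?_, ?_⟩, ?_⟩
  · exact Set.insert_subset_iff.2 ⟨hmem ha₀, Set.singleton_subset_iff.2 (hmem hb₀)⟩
  · intro z hz
    have hz' := (nClasses_eq_two_iff hfin (hmem ha₀) (hmem hb₀)
      (not_reflEquiv_cons_append_singleton hab₀)).1 hT z hz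
    simp only [reflEquiv_cons_append_singleton_iff] at hz'
    simp only [Set.mem_insert_iff, Set.mem_singleton_iff]
    tauto
  · rintro ⟨a, b, hab, hpair, hsub⟩
    refine (nClasses_eq_two_iff hfin (hpair (Set.mem_insert _ _))
      (hpair (Set.mem_insert_of_mem _ rfl))
      (not_reflEquiv_cons_append_singleton hab)).2 fun z hz => ?_
    simp only [reflEquiv_cons_append_singleton_iff]
    simpa only [Set.mem_insert_iff, Set.mem_singleton_iff, or_assoc, or_left_comm] using hsub hz

end ReflPaper
end
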